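/- arXiv:1706.07539 — 5 statements merged into one kernel-verified Lean document; each statement's English description precedes it below -/
import Mathlib

section
/- Let (X, 𝔅, μ) be a probability space, b ∈ (1, ∞], λ ≥ 0, Z ≥ 0, and ψ ∈ Ψ(b). Suppose g : X → ℝ is measurable and satisfies |g|_p ≤ Z · (p/(p−1))^λ · ψ(p) for every p ∈ (1, b). Then for every p ∈ [1, b) one has |g|_p ≤ Z · K_λ[ψ, b] · ψ(p); equivalently, sup_{p ∈ [1, b)} |g|_p / ψ(p) ≤ Z · K_λ[ψ, b]. -/
open MeasureTheory ENNReal Real Set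

/-- **Proposition 3.1.** If `ψ ∈ Ψ(b)` and a measurable `g` satisfies
`|g|_p ≤ Z (p/(p-1))^λ ψ(p)` for all `p ∈ (1,b)`, then
`|g|_p ≤ Z · K_λ[ψ,b] · ψ(p)` for all `p ∈ [1,b)`, where
`K_λ[ψ,b] = inf_{q ∈ (1,b)} (q/(q-1))^λ ψ(q)`. -/
theorem prop_3_1 {X : Type*} [MeasurableSpace X] (μ : Measure X) [IsProbabilityMeasure μ]
    (b : EReal) (hb : 1 < b) (lam Z : ℝ) (hlam : 0 ≤ lam) (hZ : 0 ≤ Z)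
    (ψ : ℝ → ℝ)
    (hψcont : ContinuousOn ψ {p : ℝ | 1 ≤ p ∧ (p : EReal) < b})
    (hψone : ∀ p : ℝ, 1 ≤ p → (p : EReal) < b → 1 ≤ ψ p)
    (g : X → ℝ) (hg : Measurable g)
    (hQ : ∀ p : ℝ, 1 < p → (p : EReal) < b →
      eLpNorm g (ENNReal.ofReal p) μ ≤ ENNReal.ofReal (Z * (p / (p - 1)) ^ lam * ψ p)) :
    ∀ p : ℝ, 1 ≤ p → (p : EReal) < b →
      eLpNorm g (ENNReal.ofReal p) μ ≤
        ENNReal.ofReal (Z *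
          sInf ((fun q : ℝ => (q / (q - 1)) ^ lam * ψ q) '' {q : ℝ | 1 < q ∧ (q : EReal) < b}) *
          ψ p) := by
  intro p hp hpb
  have hψp : 1 ≤ ψ p := hψone p hp hpb
  set f : ℝ → ℝ := fun q : ℝ => (q / (q - 1)) ^ lam * ψ q with hf
  set S : Set ℝ := {q : ℝ | 1 < q ∧ (q : EReal) < b} with hS
  -- f q ≥ 1 on S
  have hf1 : ∀ q ∈ S, 1 ≤ f q := by
    rintro q ⟨hq1, hqb⟩
    have hψq : 1 ≤ ψ q := hψone q hq1.le hqb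
    have hbase : 1 ≤ q / (q - 1) := by
      rw [le_div_iff₀ (by linarith)]; linarith
    have h1 : 1 ≤ (q / (q - 1)) ^ lam := Real.one_le_rpow hbase hlam
    calc (1:ℝ) = 1 * 1 := by ring
    _ ≤ (q / (q - 1)) ^ lam * ψ q := by
        apply mul_le_mul h1 hψq zero_le_one (by linarith)
  -- key pointwise bound
  have key : ∀ q ∈ S, eLpNorm g (ENNReal.ofReal p) μ ≤
      ENNReal.ofReal (Z * f q * ψ p) := by
    rintro q ⟨hq1, hqb⟩
    have hψq : 1 ≤ ψ q := hψone q hq1.le hqb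
    have hbase1 : (1:ℝ) ≤ q / (q - 1) := by
      rw [le_div_iff₀ (by linarith)]; linarith
    have hrq : 1 ≤ (q / (q - 1)) ^ lam := Real.one_le_rpow hbase1 hlam
    rcases le_or_gt p q with hpq | hqp
    · have h1 : eLpNorm g (ENNReal.ofReal p) μ ≤ eLpNorm g (ENNReal.ofReal q) μ :=
        eLpNorm_le_eLpNorm_of_exponent_le (ENNReal.ofReal_le_ofReal hpq)
          hg.aestronglyMeasurable
      refine h1.trans ((hQ q hq1 hqb).trans (ENNReal.ofReal_le_ofReal ?_))
      have h0 : 0 ≤ Z * (q / (q - 1)) ^ lam * ψ q := by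
        apply mul_nonneg (mul_nonneg hZ (by linarith)) (by linarith)
      calc Z * (q / (q - 1)) ^ lam * ψ q
          = Z * ((q / (q - 1)) ^ lam * ψ q) * 1 := by ring
        _ ≤ Z * f q * ψ p := by
            apply mul_le_mul_of_nonneg_left hψp
            apply mul_nonneg hZ
            apply mul_nonneg (by linarith) (by linarith)
    · have hp1 : 1 < p := hq1.trans hqp
      refine (hQ p hp1 hpb).trans (ENNReal.ofReal_le_ofReal ?_)
      have hbaseP : 0 ≤ p / (p - 1) := div_nonneg (by linarith) (by linarith)
      have hmono : p / (p - 1) ≤ q / (q - 1) := by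
        rw [div_le_div_iff₀ (by linarith) (by linarith)]
        nlinarith
      have hr : (p / (p - 1)) ^ lam ≤ (q / (q - 1)) ^ lam :=
        Real.rpow_le_rpow hbaseP hmono hlam
      calc Z * (p / (p - 1)) ^ lam * ψ p
          ≤ Z * ((q / (q - 1)) ^ lam * ψ q) * ψ p := by
            apply mul_le_mul_of_nonneg_right _ (by linarith)
            calc Z * (p / (p - 1)) ^ lam = Z * ((p / (p - 1)) ^ lam * 1) := by ring
              _ ≤ Z * ((q / (q - 1)) ^ lam * ψ q) := by
                  apply mul_le_mul_of_nonneg_left _ hZ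
                  apply mul_le_mul hr hψq zero_le_one (by linarith)
        _ = Z * f q * ψ p := rfl
  -- S is nonempty
  obtain ⟨q0, hq01, hq0b⟩ := EReal.exists_between_coe_real hb
  have hq01' : (1:ℝ) < q0 := by exact_mod_cast hq01
  have hq0S : q0 ∈ S := ⟨hq01', hq0b⟩
  have hne : (f '' S).Nonempty := ⟨f q0, mem_image_of_mem f hq0S⟩
  have hbdd : BddBelow (f '' S) := ⟨1, by rintro x ⟨q, hq, rfl⟩; exact hf1 q hq⟩
  have hA1 : 1 ≤ sInf (f '' S) := le_csInf hne (by rintro x ⟨q, hq, rfl⟩; exact hf1 q hq)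
  rcases eq_or_lt_of_le hZ with hZ0 | hZpos
  · have h0 : eLpNorm g (ENNReal.ofReal p) μ ≤ ENNReal.ofReal (Z * f q0 * ψ p) :=
      key q0 hq0S
    rw [← hZ0] at h0 ⊢
    simpa using h0
  · have hfin : eLpNorm g (ENNReal.ofReal p) μ ≠ ∞ :=
      ne_top_of_le_ne_top ENNReal.ofReal_ne_top (key q0 hq0S)
    have hpos : 0 < Z * ψ p := mul_pos hZpos (by linarith)
    rw [ENNReal.le_ofReal_iff_toReal_le hfin (by positivity)]
    set c := (eLpNorm g (ENNReal.ofReal p) μ).toReal with hc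
    have hcq : ∀ q ∈ S, c ≤ Z * f q * ψ p := by
      intro q hq
      refine ENNReal.toReal_le_of_le_ofReal ?_ (key q hq)
      have := hf1 q hq
      positivity
    have : c / (Z * ψ p) ≤ sInf (f '' S) := by
      apply le_csInf hne
      rintro x ⟨q, hq, rfl⟩
      rw [div_le_iff₀ hpos]
      calc c ≤ Z * f q * ψ p := hcq q hq
        _ = f q * (Z * ψ p) := by ring
    calc c = c / (Z * ψ p) * (Z * ψ p) := by field_simp
      _ ≤ sInf (f '' S) * (Z * ψ p) := mul_le_mul_of_nonneg_right this hpos.le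
      _ = Z * sInf (f '' S) * ψ p := by ring
end

section
/- Let (X, 𝔅, μ) be a probability space, b ∈ (1, ∞], λ ≥ 0, Z ≥ 0, and ψ ∈ Ψ(b). Suppose f : X → ℝ is measurable with N := sup_{p ∈ [1, b)} |f|_p / ψ(p) < ∞, and g : X → ℝ is measurable with |g|_p ≤ Z · (p/(p−1))^λ · |f|_p for every p ∈ (1, b). Then sup_{p ∈ [1, b)} |g|_p / ψ(p) ≤ K_λ[ψ, b] · Z · N. -/
/-!
Let `N = ‖f‖_{Gψ}`. For `p ≤ q` the monotonicity of `L^p` norms on a probability space gives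
`|g|_p ≤ |g|_q ≤ Z (q/(q-1))^λ |f|_q ≤ Z (q/(q-1))^λ ψ(q) N`, while for `p > q` the weight
`(p/(p-1))^λ` is at most `(q/(q-1))^λ`, so `|g|_p / ψ(p) ≤ Z (q/(q-1))^λ N` directly. Either way
`|g|_p / ψ(p) ≤ (q/(q-1))^λ ψ(q) Z N` for every admissible `q`; take the infimum over `q`.
-/

open MeasureTheory ENNReal Real Set Filter Topology

noncomputable def grandLpNorm {X : Type*} [MeasurableSpace X] (μ : Measure X) (b : EReal)
    (ψ : ℝ → ℝ) (f : X → ℝ) : ℝ≥0∞ :=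
  ⨆ (p : ℝ) (_ : 1 ≤ p) (_ : (p : EReal) < b),
    eLpNorm f (ENNReal.ofReal p) μ / ENNReal.ofReal (ψ p)

theorem one_le_rpow_div_sub_one {q lam : ℝ} (hq : 1 < q) (hlam : 0 ≤ lam) :
    1 ≤ (q / (q - 1)) ^ lam :=
  Real.one_le_rpow ((one_le_div (by linarith)).2 (by linarith)) hlam

theorem rpow_div_sub_one_le_of_le {p q lam : ℝ} (hq : 1 < q) (hqp : q ≤ p) (hlam : 0 ≤ lam) :
    (p / (p - 1)) ^ lam ≤ (q / (q - 1)) ^ lam := by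
  refine Real.rpow_le_rpow (div_nonneg (by linarith) (by linarith)) ?_ hlam
  rw [div_le_div_iff₀ (by linarith) (by linarith)]
  nlinarith

theorem le_ofReal_csInf_mul {S : Set ℝ} (hS : S.Nonempty) (hSb : BddBelow S) {a c : ℝ≥0∞}
    (hc : 0 < sInf S ∨ c ≠ ∞) (h : ∀ s ∈ S, a ≤ ENNReal.ofReal s * c) :
    a ≤ ENNReal.ofReal (sInf S) * c := by
  obtain ⟨u, -, hu, huS⟩ := exists_seq_tendsto_sInf hS hSb
  have hlim : Tendsto (fun n ↦ ENNReal.ofReal (u n) * c) atTop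
      (𝓝 (ENNReal.ofReal (sInf S) * c)) :=
    ENNReal.Tendsto.mul_const (ENNReal.tendsto_ofReal hu)
      (hc.imp_left fun h ↦ (ENNReal.ofReal_pos.2 h).ne')
  exact ge_of_tendsto' hlim fun n ↦ h _ (huS n)

section GrandLebesgue

variable {X : Type*} [MeasurableSpace X] {μ : Measure X} {b : EReal} {ψ : ℝ → ℝ} {f g : X → ℝ}

theorem eLpNorm_le_mul_grandLpNorm {p : ℝ} (hp : 1 ≤ p) (hpb : (p : EReal) < b) (hψ : 0 < ψ p) :
    eLpNorm f (ENNReal.ofReal p) μ ≤ ENNReal.ofReal (ψ p) * grandLpNorm μ b ψ f := by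
  rw [mul_comm, ← ENNReal.div_le_iff (ENNReal.ofReal_pos.2 hψ).ne' ENNReal.ofReal_ne_top]
  exact le_iSup₂_of_le p hp (le_iSup_of_le hpb le_rfl)

variable [IsProbabilityMeasure μ] {lam Z : ℝ}

theorem eLpNorm_div_le_of_type (hlam : 0 ≤ lam) (hZ : 0 ≤ Z)
    (hψone : ∀ p : ℝ, 1 ≤ p → (p : EReal) < b → 1 ≤ ψ p) (hg : AEStronglyMeasurable g μ)
    (hQ : ∀ p : ℝ, 1 < p → (p : EReal) < b →
      eLpNorm g (ENNReal.ofReal p) μ ≤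
        ENNReal.ofReal (Z * (p / (p - 1)) ^ lam) * eLpNorm f (ENNReal.ofReal p) μ)
    {p q : ℝ} (hp : 1 ≤ p) (hpb : (p : EReal) < b) (hq : 1 < q) (hqb : (q : EReal) < b) :
    eLpNorm g (ENNReal.ofReal p) μ / ENNReal.ofReal (ψ p) ≤
      ENNReal.ofReal ((q / (q - 1)) ^ lam * ψ q) * (ENNReal.ofReal Z * grandLpNorm μ b ψ f) := by
  set N := grandLpNorm μ b ψ f
  have hψp : 1 ≤ ψ p := hψone p hp hpb
  have hψq : 1 ≤ ψ q := hψone q hq.le hqb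
  have hw : 0 ≤ (q / (q - 1)) ^ lam := (one_le_rpow_div_sub_one hq hlam).trans' zero_le_one
  have hg_le : ∀ r : ℝ, 1 < r → (r : EReal) < b → eLpNorm g (ENNReal.ofReal r) μ ≤
      ENNReal.ofReal (Z * (r / (r - 1)) ^ lam) * (ENNReal.ofReal (ψ r) * N) := fun r hr hrb ↦ by
    refine (hQ r hr hrb).trans ?_
    gcongr
    exact eLpNorm_le_mul_grandLpNorm hr.le hrb (by linarith [hψone r hr.le hrb])
  rw [ENNReal.ofReal_mul hw]
  rcases le_or_gt p q with hpq | hqp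
  · calc eLpNorm g (ENNReal.ofReal p) μ / ENNReal.ofReal (ψ p)
        ≤ eLpNorm g (ENNReal.ofReal p) μ :=
          ENNReal.div_le_of_le_mul (le_mul_of_one_le_right' (ENNReal.one_le_ofReal.2 hψp))
      _ ≤ eLpNorm g (ENNReal.ofReal q) μ :=
          eLpNorm_le_eLpNorm_of_exponent_le (ENNReal.ofReal_le_ofReal hpq) hg
      _ ≤ _ := (hg_le q hq hqb).trans_eq (by rw [ENNReal.ofReal_mul hZ]; ring)
  · calc eLpNorm g (ENNReal.ofReal p) μ / ENNReal.ofReal (ψ p)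
        ≤ ENNReal.ofReal (Z * (p / (p - 1)) ^ lam) * N :=
          ENNReal.div_le_of_le_mul ((hg_le p (hq.trans hqp) hpb).trans_eq (by ring))
      _ ≤ ENNReal.ofReal (Z * (q / (q - 1)) ^ lam) * N :=
          mul_le_mul_left (ENNReal.ofReal_le_ofReal
            (mul_le_mul_of_nonneg_left (rpow_div_sub_one_le_of_le hq hqp.le hlam) hZ)) N
      _ = ENNReal.ofReal ((q / (q - 1)) ^ lam) * 1 * (ENNReal.ofReal Z * N) := by
          rw [ENNReal.ofReal_mul hZ]; ring
      _ ≤ _ := by gcongr; exact ENNReal.one_le_ofReal.2 hψq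

end GrandLebesgue

theorem thm_3_1_general {X : Type*} [MeasurableSpace X] (μ : Measure X) [IsProbabilityMeasure μ]
    (b : EReal) (hb : 1 < b) (lam Z : ℝ) (hlam : 0 ≤ lam) (hZ : 0 ≤ Z)
    (ψ : ℝ → ℝ)
    (hψone : ∀ p : ℝ, 1 ≤ p → (p : EReal) < b → 1 ≤ ψ p)
    (f g : X → ℝ) (hg : Measurable g)
    (hQ : ∀ p : ℝ, 1 < p → (p : EReal) < b →
      eLpNorm g (ENNReal.ofReal p) μ ≤
        ENNReal.ofReal (Z * (p / (p - 1)) ^ lam) * eLpNorm f (ENNReal.ofReal p) μ) :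
    (⨆ (p : ℝ) (_ : 1 ≤ p) (_ : (p : EReal) < b),
        eLpNorm g (ENNReal.ofReal p) μ / ENNReal.ofReal (ψ p)) ≤
      ENNReal.ofReal
          (sInf ((fun q : ℝ => (q / (q - 1)) ^ lam * ψ q) '' {q : ℝ | 1 < q ∧ (q : EReal) < b}) *
            Z) *
        (⨆ (p : ℝ) (_ : 1 ≤ p) (_ : (p : EReal) < b),
          eLpNorm f (ENNReal.ofReal p) μ / ENNReal.ofReal (ψ p)) := by
  set S := (fun q : ℝ => (q / (q - 1)) ^ lam * ψ q) '' {q : ℝ | 1 < q ∧ (q : EReal) < b}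
  obtain ⟨q₀, hq₀, hq₀b⟩ := EReal.lt_iff_exists_real_btwn.1 hb
  have hS : S.Nonempty := ⟨_, q₀, ⟨by exact_mod_cast hq₀, hq₀b⟩, rfl⟩
  have hS_one : ∀ s ∈ S, 1 ≤ s := by
    rintro _ ⟨q, ⟨hq, hqb⟩, rfl⟩
    exact one_le_mul_of_one_le_of_one_le (one_le_rpow_div_sub_one hq hlam) (hψone q hq.le hqb)
  have hK : 1 ≤ sInf S := le_csInf hS hS_one
  change grandLpNorm μ b ψ g ≤ ENNReal.ofReal (sInf S * Z) * grandLpNorm μ b ψ f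
  rw [ENNReal.ofReal_mul (by linarith), mul_assoc]
  refine iSup₂_le fun p hp ↦ iSup_le fun hpb ↦ ?_
  refine le_ofReal_csInf_mul hS ⟨1, hS_one⟩ (Or.inl (by linarith)) ?_
  rintro _ ⟨q, ⟨hq, hqb⟩, rfl⟩
  exact eLpNorm_div_le_of_type hlam hZ hψone hg.aestronglyMeasurable hQ hp hpb hq hqb

/-- **Theorem 3.1.** An operator of type `(λ, λ)` is bounded on the Grand Lebesgue Space
`Gψ`, with norm at most `Z · K_λ[ψ,b]`, where
`K_λ[ψ,b] = inf_{q ∈ (1,b)} (q/(q-1))^λ ψ(q)`. -/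
theorem thm_3_1 {X : Type*} [MeasurableSpace X] (μ : Measure X) [IsProbabilityMeasure μ]
    (b : EReal) (hb : 1 < b) (lam Z : ℝ) (hlam : 0 ≤ lam) (hZ : 0 ≤ Z)
    (ψ : ℝ → ℝ)
    (hψcont : ContinuousOn ψ {p : ℝ | 1 ≤ p ∧ (p : EReal) < b})
    (hψone : ∀ p : ℝ, 1 ≤ p → (p : EReal) < b → 1 ≤ ψ p)
    (f g : X → ℝ) (hf : Measurable f) (hg : Measurable g)
    (hN : (⨆ (p : ℝ) (_ : 1 ≤ p) (_ : (p : EReal) < b),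
        eLpNorm f (ENNReal.ofReal p) μ / ENNReal.ofReal (ψ p)) < ⊤)
    (hQ : ∀ p : ℝ, 1 < p → (p : EReal) < b →
      eLpNorm g (ENNReal.ofReal p) μ ≤
        ENNReal.ofReal (Z * (p / (p - 1)) ^ lam) * eLpNorm f (ENNReal.ofReal p) μ) :
    (⨆ (p : ℝ) (_ : 1 ≤ p) (_ : (p : EReal) < b),
        eLpNorm g (ENNReal.ofReal p) μ / ENNReal.ofReal (ψ p)) ≤
      ENNReal.ofReal
          (sInf ((fun q : ℝ => (q / (q - 1)) ^ lam * ψ q) '' {q : ℝ | 1 < q ∧ (q : EReal) < b}) *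
            Z) *
        (⨆ (p : ℝ) (_ : 1 ≤ p) (_ : (p : EReal) < b),
          eLpNorm f (ENNReal.ofReal p) μ / ENNReal.ofReal (ψ p)) :=
  thm_3_1_general μ b hb lam Z hlam hZ ψ hψone f g hg hQ
end

section
/- Let (X, 𝔅, μ) be a probability space, b ∈ (1, ∞], λ > ν ≥ 0, Δ := λ − ν, Z ≥ 0, and ψ ∈ Ψ(b). Suppose f : X → ℝ is measurable with N := sup_{p ∈ [1, b)} |f|_p / ψ(p) < ∞, and g : X → ℝ is measurable with |g|_p ≤ Z · p^λ/(p−1)^ν · |f|_p for every p ∈ (1, b). Define ζ(p) := p^Δ · ψ(p) for p ∈ [1, b). Then sup_{p ∈ [1, b)} |g|_p / ζ(p) ≤ Z · N · K_ν[ζ, b], where K_ν[ζ, b] = inf_{q ∈ (1, b)} (q/(q−1))^ν · q^Δ · ψ(q). -/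
open MeasureTheory ENNReal Real Set

/-!
For `1 < r < b` the type-`(λ, ν)` bound and `|f|_r ≤ N ψ(r)` give
`|g|_r ≤ Z (r/(r-1))^ν ζ(r) N`. Fix `p ∈ [1, b)` and `q ∈ (1, b)`. If `p ≤ q`, Lyapunov's
inequality `|g|_p ≤ |g|_q` and `ζ(p) ≥ 1` give `|g|_p / ζ(p) ≤ Z K(q) N` with
`K(q) = (q/(q-1))^ν ζ(q)`. If `q < p`, the bound at `r = p` and the monotonicity of
`r ↦ r/(r-1)` give `|g|_p / ζ(p) ≤ Z (q/(q-1))^ν N ≤ Z K(q) N`, since `ζ(q) ≥ 1`.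
Taking the infimum over `q` and the supremum over `p` yields the theorem.
-/

lemma rpow_div_sub_one_rpow {r : ℝ} (hr : 1 < r) (lam nu : ℝ) :
    r ^ lam / (r - 1) ^ nu = (r / (r - 1)) ^ nu * r ^ (lam - nu) := by
  have hr0 : 0 < r := one_pos.trans hr
  have hr1 : 0 < r - 1 := sub_pos.2 hr
  rw [Real.div_rpow hr0.le hr1.le, Real.rpow_sub hr0]
  field_simp [(Real.rpow_pos_of_pos hr0 nu).ne', (Real.rpow_pos_of_pos hr1 nu).ne']

lemma div_sub_one_le_div_sub_one {p q : ℝ} (hq : 1 < q) (hqp : q ≤ p) :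
    p / (p - 1) ≤ q / (q - 1) := by
  rw [div_le_div_iff₀ (by linarith) (by linarith)]
  nlinarith

lemma le_ofReal_mul_sInf_mul {x N : ℝ≥0∞} (hN : N ≠ ∞) {Z : ℝ} (hZ : 0 ≤ Z) {S : Set ℝ}
    (hS : S.Nonempty) (hSb : BddBelow S) (h : ∀ s ∈ S, x ≤ ENNReal.ofReal (Z * s) * N) :
    x ≤ ENNReal.ofReal (Z * sInf S) * N := by
  have hmono : Monotone fun t => ENNReal.ofReal (Z * t) * N := fun s t hst =>
    mul_le_mul_left (ENNReal.ofReal_le_ofReal (mul_le_mul_of_nonneg_left hst hZ)) N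
  have hcont : ContinuousAt (fun t => ENNReal.ofReal (Z * t) * N) (sInf S) :=
    ENNReal.Tendsto.mul_const
      (ENNReal.continuous_ofReal.comp (continuous_const.mul continuous_id)).continuousAt
      (Or.inr hN)
  rw [hmono.map_csInf_of_continuousAt hcont hS hSb]
  exact le_sInf (forall_mem_image.2 h)

section TypeBound

variable {X : Type*} [MeasurableSpace X] {μ : Measure X} {b : EReal} {lam nu Z : ℝ}
  {ψ : ℝ → ℝ} {f g : X → ℝ} {N : ℝ≥0∞}

lemma eLpNorm_le_of_type_bound (hZ : 0 ≤ Z) {r : ℝ} (hr : 1 < r)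
    (hfN : eLpNorm f (ENNReal.ofReal r) μ ≤ ENNReal.ofReal (ψ r) * N)
    (hQ : eLpNorm g (ENNReal.ofReal r) μ ≤
      ENNReal.ofReal (Z * r ^ lam / (r - 1) ^ nu) * eLpNorm f (ENNReal.ofReal r) μ) :
    eLpNorm g (ENNReal.ofReal r) μ ≤
      ENNReal.ofReal (Z * (r / (r - 1)) ^ nu * (r ^ (lam - nu) * ψ r)) * N := by
  have hcoef : Z * r ^ lam / (r - 1) ^ nu * ψ r
      = Z * (r / (r - 1)) ^ nu * (r ^ (lam - nu) * ψ r) := by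
    rw [mul_div_assoc, rpow_div_sub_one_rpow hr]
    ring
  calc eLpNorm g (ENNReal.ofReal r) μ
      ≤ ENNReal.ofReal (Z * r ^ lam / (r - 1) ^ nu) * (ENNReal.ofReal (ψ r) * N) :=
        hQ.trans (mul_le_mul_right hfN _)
    _ = _ := by
        have : 0 ≤ Z * r ^ lam / (r - 1) ^ nu := by
          have := sub_pos.2 hr
          positivity
        rw [← mul_assoc, ← ENNReal.ofReal_mul this, hcoef]

variable [IsProbabilityMeasure μ]

theorem eLpNorm_div_le_of_type_bound (hnu : 0 ≤ nu) (hnulam : nu ≤ lam) (hZ : 0 ≤ Z)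
    (hg : AEStronglyMeasurable g μ) (hψ : ∀ p : ℝ, 1 ≤ p → (p : EReal) < b → 1 ≤ ψ p)
    (hfN : ∀ p : ℝ, 1 ≤ p → (p : EReal) < b →
      eLpNorm f (ENNReal.ofReal p) μ ≤ ENNReal.ofReal (ψ p) * N)
    (hQ : ∀ p : ℝ, 1 < p → (p : EReal) < b →
      eLpNorm g (ENNReal.ofReal p) μ ≤
        ENNReal.ofReal (Z * p ^ lam / (p - 1) ^ nu) * eLpNorm f (ENNReal.ofReal p) μ)
    {p q : ℝ} (hp : 1 ≤ p) (hpb : (p : EReal) < b) (hq : 1 < q) (hqb : (q : EReal) < b) :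
    eLpNorm g (ENNReal.ofReal p) μ / ENNReal.ofReal (p ^ (lam - nu) * ψ p) ≤
      ENNReal.ofReal (Z * ((q / (q - 1)) ^ nu * q ^ (lam - nu) * ψ q)) * N := by
  have hΔ : 0 ≤ lam - nu := sub_nonneg.2 hnulam
  have hζp : 1 ≤ p ^ (lam - nu) * ψ p :=
    one_le_mul_of_one_le_of_one_le (Real.one_le_rpow hp hΔ) (hψ p hp hpb)
  have hζq : 1 ≤ q ^ (lam - nu) * ψ q :=
    one_le_mul_of_one_le_of_one_le (Real.one_le_rpow hq.le hΔ) (hψ q hq.le hqb)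
  rcases le_or_gt p q with hpq | hqp
  · have hζp' : 1 ≤ ENNReal.ofReal (p ^ (lam - nu) * ψ p) := ENNReal.one_le_ofReal.2 hζp
    calc eLpNorm g (ENNReal.ofReal p) μ / ENNReal.ofReal (p ^ (lam - nu) * ψ p)
        ≤ eLpNorm g (ENNReal.ofReal p) μ :=
          ENNReal.div_le_of_le_mul (le_mul_of_one_le_right' hζp')
      _ ≤ eLpNorm g (ENNReal.ofReal q) μ :=
          eLpNorm_le_eLpNorm_of_exponent_le (ENNReal.ofReal_le_ofReal hpq) hg
      _ ≤ _ := by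
          convert eLpNorm_le_of_type_bound hZ hq (hfN q hq.le hqb) (hQ q hq hqb) using 3
          ring
  · have hp1 : 1 < p := hq.trans hqp
    have hbound := eLpNorm_le_of_type_bound hZ hp1 (hfN p hp hpb) (hQ p hp1 hpb)
    rw [ENNReal.ofReal_mul (by positivity), mul_right_comm] at hbound
    have hζ0 : ENNReal.ofReal (p ^ (lam - nu) * ψ p) ≠ 0 := by
      rw [ne_eq, ENNReal.ofReal_eq_zero, not_le]; linarith
    refine ((ENNReal.div_le_iff hζ0 ENNReal.ofReal_ne_top).2 hbound).trans ?_
    gcongr ENNReal.ofReal (Z * ?_) * N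
    calc (p / (p - 1)) ^ nu
        ≤ (q / (q - 1)) ^ nu :=
          Real.rpow_le_rpow (by positivity) (div_sub_one_le_div_sub_one hq hqp.le) hnu
      _ ≤ (q / (q - 1)) ^ nu * q ^ (lam - nu) * ψ q := by
          rw [mul_assoc]
          exact le_mul_of_one_le_right (by positivity) hζq

end TypeBound

theorem thm_4_1_general {X : Type*} [MeasurableSpace X] (μ : Measure X) [IsProbabilityMeasure μ]
    (b : EReal) (hb : 1 < b) (lam nu Z : ℝ) (hnu : 0 ≤ nu) (hnulam : nu < lam) (hZ : 0 ≤ Z)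
    (ψ : ℝ → ℝ)
    (hψone : ∀ p : ℝ, 1 ≤ p → (p : EReal) < b → 1 ≤ ψ p)
    (f g : X → ℝ) (hg : Measurable g)
    (hN : (⨆ (p : ℝ) (_ : 1 ≤ p) (_ : (p : EReal) < b),
        eLpNorm f (ENNReal.ofReal p) μ / ENNReal.ofReal (ψ p)) < ⊤)
    (hQ : ∀ p : ℝ, 1 < p → (p : EReal) < b →
      eLpNorm g (ENNReal.ofReal p) μ ≤
        ENNReal.ofReal (Z * p ^ lam / (p - 1) ^ nu) * eLpNorm f (ENNReal.ofReal p) μ) :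
    (⨆ (p : ℝ) (_ : 1 ≤ p) (_ : (p : EReal) < b),
        eLpNorm g (ENNReal.ofReal p) μ / ENNReal.ofReal (p ^ (lam - nu) * ψ p)) ≤
      ENNReal.ofReal (Z *
          sInf ((fun q : ℝ => (q / (q - 1)) ^ nu * q ^ (lam - nu) * ψ q) ''
            {q : ℝ | 1 < q ∧ (q : EReal) < b})) *
        (⨆ (p : ℝ) (_ : 1 ≤ p) (_ : (p : EReal) < b),
          eLpNorm f (ENNReal.ofReal p) μ / ENNReal.ofReal (ψ p)) := by
  set N := ⨆ (p : ℝ) (_ : 1 ≤ p) (_ : (p : EReal) < b),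
    eLpNorm f (ENNReal.ofReal p) μ / ENNReal.ofReal (ψ p)
  have hfN : ∀ p : ℝ, 1 ≤ p → (p : EReal) < b →
      eLpNorm f (ENNReal.ofReal p) μ ≤ ENNReal.ofReal (ψ p) * N := fun p hp hpb => by
    have hψ0 : ENNReal.ofReal (ψ p) ≠ 0 := by
      rw [ne_eq, ENNReal.ofReal_eq_zero, not_le]; linarith [hψone p hp hpb]
    rw [mul_comm, ← ENNReal.div_le_iff hψ0 ENNReal.ofReal_ne_top]
    exact le_iSup₂_of_le p hp (le_iSup_of_le hpb le_rfl)
  obtain ⟨q₀, hq₀, hq₀b⟩ := EReal.lt_iff_exists_real_btwn.1 hb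
  have hbdd : BddBelow ((fun q : ℝ => (q / (q - 1)) ^ nu * q ^ (lam - nu) * ψ q) ''
      {q : ℝ | 1 < q ∧ (q : EReal) < b}) := by
    refine ⟨0, forall_mem_image.2 fun q ⟨hq, hqb⟩ => ?_⟩
    have := sub_pos.2 hq
    have := hψone q hq.le hqb
    positivity
  refine iSup₂_le fun p hp => iSup_le fun hpb =>
    le_ofReal_mul_sInf_mul hN.ne hZ ⟨_, mem_image_of_mem _ ⟨EReal.coe_lt_coe_iff.1 hq₀, hq₀b⟩⟩
      hbdd (forall_mem_image.2 fun q ⟨hq, hqb⟩ => ?_)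
  exact eLpNorm_div_le_of_type_bound hnu hnulam.le hZ hg.aestronglyMeasurable hψone hfN hQ
    hp hpb hq hqb

/-- **Theorem 4.1.** An operator of type `(λ, ν)` with `λ > ν ≥ 0` maps `Gψ` into the
Grand Lebesgue Space `Gζ` with `ζ(p) = p^Δ ψ(p)`, `Δ = λ - ν`, with norm at most
`Z · K_ν[ζ,b]`, where `K_ν[ζ,b] = inf_{q ∈ (1,b)} (q/(q-1))^ν q^Δ ψ(q)`. -/
theorem thm_4_1 {X : Type*} [MeasurableSpace X] (μ : Measure X) [IsProbabilityMeasure μ]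
    (b : EReal) (hb : 1 < b) (lam nu Z : ℝ) (hnu : 0 ≤ nu) (hnulam : nu < lam) (hZ : 0 ≤ Z)
    (ψ : ℝ → ℝ)
    (hψcont : ContinuousOn ψ {p : ℝ | 1 ≤ p ∧ (p : EReal) < b})
    (hψone : ∀ p : ℝ, 1 ≤ p → (p : EReal) < b → 1 ≤ ψ p)
    (f g : X → ℝ) (hf : Measurable f) (hg : Measurable g)
    (hN : (⨆ (p : ℝ) (_ : 1 ≤ p) (_ : (p : EReal) < b),
        eLpNorm f (ENNReal.ofReal p) μ / ENNReal.ofReal (ψ p)) < ⊤)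
    (hQ : ∀ p : ℝ, 1 < p → (p : EReal) < b →
      eLpNorm g (ENNReal.ofReal p) μ ≤
        ENNReal.ofReal (Z * p ^ lam / (p - 1) ^ nu) * eLpNorm f (ENNReal.ofReal p) μ) :
    (⨆ (p : ℝ) (_ : 1 ≤ p) (_ : (p : EReal) < b),
        eLpNorm g (ENNReal.ofReal p) μ / ENNReal.ofReal (p ^ (lam - nu) * ψ p)) ≤
      ENNReal.ofReal (Z *
          sInf ((fun q : ℝ => (q / (q - 1)) ^ nu * q ^ (lam - nu) * ψ q) ''
            {q : ℝ | 1 < q ∧ (q : EReal) < b})) *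
        (⨆ (p : ℝ) (_ : 1 ≤ p) (_ : (p : EReal) < b),
          eLpNorm f (ENNReal.ofReal p) μ / ENNReal.ofReal (ψ p)) :=
  thm_4_1_general μ b hb lam nu Z hnu hnulam hZ ψ hψone f g hg hN hQ
end

section
/- Let (X, 𝔅, μ) be a probability space, b ∈ (1, ∞], and ζ, τ ∈ Ψ(b). Let g_n : X → ℝ (n ∈ ℕ) and g_∞ : X → ℝ be measurable functions such that: (i) M := sup_n sup_{p ∈ [1, b)} |g_n|_p / ζ(p) < ∞; (ii) for every p ∈ [1, b), |g_n − g_∞|_p → 0 as n → ∞; (iii) for every ε > 0 there exists p₁ ∈ [1, b) such that ζ(p) ≤ ε · τ(p) for all p ∈ (p₁, b) (i.e. ζ(p)/τ(p) → 0 as p → b−). Then sup_{p ∈ [1, b)} |g_n − g_∞|_p / τ(p) → 0 as n → ∞, i.e. g_n converges to g_∞ in the Grand Lebesgue norm Gτ. -/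
open MeasureTheory ENNReal Real Set Filter

/-!
For `p` below a threshold `p₁`, the `L^p`-norms of `g_n - g_∞` are controlled uniformly by the
`L^{p₁}`-norm (the measure is a probability measure, so `|·|_p` increases with `p`), which tends
to `0`. Above `p₁` nothing tends to `0`, but there `|g_n - g_∞|_p ≤ 2 M ζ(p) ≤ 2 M ε τ(p)`,
the bound for `g_∞` being inherited from the `g_n` in the limit.
-/

section

variable {X E : Type*} [MeasurableSpace X] [NormedAddCommGroup E]

noncomputable def grandLebesgueNorm (μ : Measure X) (b : EReal) (ψ : ℝ → ℝ) (f : X → E) :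
    ℝ≥0∞ :=
  ⨆ (p : ℝ) (_ : 1 ≤ p) (_ : (p : EReal) < b),
    eLpNorm f (ENNReal.ofReal p) μ / ENNReal.ofReal (ψ p)

theorem eLpNorm_le_grandLebesgueNorm_mul {μ : Measure X} {b : EReal} {ψ : ℝ → ℝ} {f : X → E}
    (hf : grandLebesgueNorm μ b ψ f ≠ ⊤) {p : ℝ} (hp : 1 ≤ p) (hpb : (p : EReal) < b) :
    eLpNorm f (ENNReal.ofReal p) μ ≤ grandLebesgueNorm μ b ψ f * ENNReal.ofReal (ψ p) :=
  (ENNReal.div_le_iff_le_mul (.inr hf) (.inl ofReal_ne_top)).1 <|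
    le_iSup_of_le (α := ℝ≥0∞) p <| le_iSup_of_le hp <| le_iSup_of_le hpb le_rfl

theorem eLpNorm_sub_le_two_mul_of_tendsto {ι : Type*} {l : Filter ι} [l.NeBot]
    [l.IsCountablyGenerated] {μ : Measure X} {p C : ℝ≥0∞} {f : ι → X → E} {g : X → E}
    (hp : 1 ≤ p) (hf : ∀ i, AEStronglyMeasurable (f i) μ) (hg : AEStronglyMeasurable g μ)
    (hlim : Tendsto (fun i => eLpNorm (f i - g) p μ) l (nhds 0))
    (hC : ∀ i, eLpNorm (f i) p μ ≤ C) (i : ι) :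
    eLpNorm (f i - g) p μ ≤ 2 * C := by
  have hgC : eLpNorm g p μ ≤ C :=
    eLpNorm_le_of_tendstoInMeasure (.of_forall hC)
      (tendstoInMeasure_of_tendsto_eLpNorm (one_pos.trans_le hp).ne' hf hg hlim) hf
  calc eLpNorm (f i - g) p μ ≤ eLpNorm (f i) p μ + eLpNorm g p μ := eLpNorm_sub_le (hf i) hg hp
    _ ≤ C + C := add_le_add (hC i) hgC
    _ = 2 * C := (two_mul C).symm

end

theorem tendsto_iSup_div_of_monotoneOn {ι : Type*} {l : Filter ι} {S : Set ℝ}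
    {F : ι → ℝ → ℝ≥0∞} {ζ τ : ℝ → ℝ} {C : ℝ≥0∞} (hC : C ≠ ⊤)
    (hmono : ∀ n, MonotoneOn (F n) S) (hlim : ∀ p ∈ S, Tendsto (fun n => F n p) l (nhds 0))
    (hbound : ∀ n, ∀ p ∈ S, F n p ≤ C * ENNReal.ofReal (ζ p)) (hτ : ∀ p ∈ S, 1 ≤ τ p)
    (hsmall : ∀ ε : ℝ, 0 < ε → ∃ p₁ ∈ S, ∀ p ∈ S, p₁ < p → ζ p ≤ ε * τ p) :
    Tendsto (fun n => ⨆ p ∈ S, F n p / ENNReal.ofReal (τ p)) l (nhds 0) := by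
  rw [ENNReal.tendsto_nhds_zero]
  intro ε hε
  obtain ⟨r, -, hr, hrε⟩ := ENNReal.lt_iff_exists_real_btwn.1 (ENNReal.div_pos hε.ne' hC)
  have hCr : C * ENNReal.ofReal r ≤ ε :=
    (mul_le_mul_right hrε.le C).trans ENNReal.mul_div_le
  obtain ⟨p₁, hp₁, hζτ⟩ := hsmall r (ENNReal.ofReal_pos.1 hr)
  filter_upwards [ENNReal.tendsto_nhds_zero.1 (hlim p₁ hp₁) ε hε] with n hn
  refine iSup₂_le fun p hp => ENNReal.div_le_of_le_mul ?_
  rcases le_or_gt p p₁ with hpp₁ | hp₁p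
  · calc F n p ≤ F n p₁ := hmono n hp hp₁ hpp₁
      _ ≤ ε := hn
      _ ≤ ε * ENNReal.ofReal (τ p) :=
        le_mul_of_one_le_right' (ENNReal.one_le_ofReal.2 (hτ p hp))
  · calc F n p ≤ C * ENNReal.ofReal (ζ p) := hbound n p hp
      _ ≤ C * (ENNReal.ofReal r * ENNReal.ofReal (τ p)) := by
        rw [← ENNReal.ofReal_mul (ENNReal.ofReal_pos.1 hr).le]
        gcongr
        exact hζτ p hp hp₁p
      _ ≤ ε * ENNReal.ofReal (τ p) := by
        rw [← mul_assoc]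
        gcongr

theorem GLS_convergence_general {X : Type*} [MeasurableSpace X] (μ : Measure X) [IsProbabilityMeasure μ]
    (b : EReal) (ζ τ : ℝ → ℝ)
    (hτone : ∀ p : ℝ, 1 ≤ p → (p : EReal) < b → 1 ≤ τ p)
    (g : ℕ → X → ℝ) (g_inf : X → ℝ)
    (hgm : ∀ n, Measurable (g n)) (hg_infm : Measurable g_inf)
    (hbdd : (⨆ (n : ℕ) (p : ℝ) (_ : 1 ≤ p) (_ : (p : EReal) < b),
        eLpNorm (g n) (ENNReal.ofReal p) μ / ENNReal.ofReal (ζ p)) < ⊤)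
    (hconv : ∀ p : ℝ, 1 ≤ p → (p : EReal) < b →
      Filter.Tendsto (fun n : ℕ => eLpNorm (fun x => g n x - g_inf x) (ENNReal.ofReal p) μ)
        Filter.atTop (nhds 0))
    (hsmall : ∀ ε : ℝ, 0 < ε → ∃ p₁ : ℝ, 1 ≤ p₁ ∧ (p₁ : EReal) < b ∧
      ∀ p : ℝ, p₁ < p → (p : EReal) < b → ζ p ≤ ε * τ p) :
    Filter.Tendsto (fun n : ℕ => ⨆ (p : ℝ) (_ : 1 ≤ p) (_ : (p : EReal) < b),
        eLpNorm (fun x => g n x - g_inf x) (ENNReal.ofReal p) μ / ENNReal.ofReal (τ p))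
      Filter.atTop (nhds 0) := by
  set M := ⨆ n, grandLebesgueNorm μ b ζ (g n)
  have hM : M ≠ ⊤ := hbdd.ne
  have hgM : ∀ n, grandLebesgueNorm μ b ζ (g n) ≤ M :=
    le_iSup (fun n => grandLebesgueNorm μ b ζ (g n))
  have hg_le : ∀ n (p : ℝ), 1 ≤ p → (p : EReal) < b →
      eLpNorm (g n) (ENNReal.ofReal p) μ ≤ M * ENNReal.ofReal (ζ p) := fun n p hp hpb =>
    (eLpNorm_le_grandLebesgueNorm_mul (ne_top_of_le_ne_top hM (hgM n)) hp hpb).trans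
      (mul_le_mul_left (hgM n) _)
  simp only [iSup_and']
  refine tendsto_iSup_div_of_monotoneOn (S := {p | 1 ≤ p ∧ (p : EReal) < b}) (ζ := ζ)
    (C := 2 * M) (ENNReal.mul_ne_top ofNat_ne_top hM) (fun n p _ q _ hpq => ?_)
    (fun p hp => hconv p hp.1 hp.2) (fun n p hp => ?_) (fun p hp => hτone p hp.1 hp.2)
    (fun ε hε => ?_)
  · exact eLpNorm_le_eLpNorm_of_exponent_le (ENNReal.ofReal_le_ofReal hpq)
      ((hgm n).sub hg_infm).aestronglyMeasurable
  · rw [mul_assoc]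
    exact eLpNorm_sub_le_two_mul_of_tendsto (ENNReal.one_le_ofReal.2 hp.1)
      (fun n => (hgm n).aestronglyMeasurable) hg_infm.aestronglyMeasurable (hconv p hp.1 hp.2)
      (hg_le · p hp.1 hp.2) n
  · obtain ⟨p₁, hp₁, hp₁b, h⟩ := hsmall ε hε
    exact ⟨p₁, ⟨hp₁, hp₁b⟩, fun p hp hp₁p => h p hp₁p hp.2⟩

/-- **Theorem of Section 5.** If a sequence `(g_n)` is bounded in `Gζ`, converges to `g_∞`
in every `L^p`-norm, `p ∈ [1,b)`, and `ζ(p)/τ(p) → 0` as `p → b-`, then `g_n → g_∞` in the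
Grand Lebesgue norm `Gτ`. -/
theorem GLS_convergence {X : Type*} [MeasurableSpace X] (μ : Measure X) [IsProbabilityMeasure μ]
    (b : EReal) (hb : 1 < b) (ζ τ : ℝ → ℝ)
    (hζcont : ContinuousOn ζ {p : ℝ | 1 ≤ p ∧ (p : EReal) < b})
    (hζone : ∀ p : ℝ, 1 ≤ p → (p : EReal) < b → 1 ≤ ζ p)
    (hτcont : ContinuousOn τ {p : ℝ | 1 ≤ p ∧ (p : EReal) < b})
    (hτone : ∀ p : ℝ, 1 ≤ p → (p : EReal) < b → 1 ≤ τ p)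
    (g : ℕ → X → ℝ) (g_inf : X → ℝ)
    (hgm : ∀ n, Measurable (g n)) (hg_infm : Measurable g_inf)
    (hbdd : (⨆ (n : ℕ) (p : ℝ) (_ : 1 ≤ p) (_ : (p : EReal) < b),
        eLpNorm (g n) (ENNReal.ofReal p) μ / ENNReal.ofReal (ζ p)) < ⊤)
    (hconv : ∀ p : ℝ, 1 ≤ p → (p : EReal) < b →
      Filter.Tendsto (fun n : ℕ => eLpNorm (fun x => g n x - g_inf x) (ENNReal.ofReal p) μ)
        Filter.atTop (nhds 0))
    (hsmall : ∀ ε : ℝ, 0 < ε → ∃ p₁ : ℝ, 1 ≤ p₁ ∧ (p₁ : EReal) < b ∧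
      ∀ p : ℝ, p₁ < p → (p : EReal) < b → ζ p ≤ ε * τ p) :
    Filter.Tendsto (fun n : ℕ => ⨆ (p : ℝ) (_ : 1 ≤ p) (_ : (p : EReal) < b),
        eLpNorm (fun x => g n x - g_inf x) (ENNReal.ofReal p) μ / ENNReal.ofReal (τ p))
      Filter.atTop (nhds 0) :=
  GLS_convergence_general μ b ζ τ hτone g g_inf hgm hg_infm hbdd hconv hsmall
end

section
/- Let (X, 𝔅, μ) be a probability space, b ∈ (1, ∞), γ > −1, and let L : (0, ∞) → (0, ∞) be a continuous slowly varying function (i.e. for every c > 0, L(cx)/L(x) → 1 as x → ∞). Suppose f : X → ℝ is measurable and |f|_p ≤ (b − p)^{−(γ+1)/b} · L(1/(b − p))^{1/b} for every p ∈ [1, b). Then there exists a constant C = C(b, γ, L) > 0 such that μ{x : |f(x)| ≥ y} ≤ C · y^{−b} (ln y)^{γ+1} L(ln y) for all y ≥ e. -/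
open MeasureTheory ENNReal Real Set Filter

/-!
Write `t = log y`. For large `t`, Markov's inequality with the exponent `p = b - 1/t` gives
`μ {y ≤ |f|} ≤ y^{-p} |f|_p^p`, where `y^{-p} = e · y^{-b}` and the moment bound contributes
`t^{(γ+1)p/b} L(t)^{p/b} ≤ t^{γ+1} L(t) · L(t)^{-1/(bt)}`. The last factor stays bounded because a
positive continuous function with `L(2x)/L(x) → 1` satisfies `L(t) ≥ m/t` eventually (halve `t`
until it lands in a fixed compact interval). For small `t` the bound follows from `μ ≤ 1`, the
right-hand side being bounded below there.
-/

lemma le_mul_apply_of_doubling {L : ℝ → ℝ} {t₀ m : ℝ} (ht₀ : 0 < t₀) (hm : 0 ≤ m)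
    (hdouble : ∀ x, t₀ ≤ x → L x ≤ 2 * L (2 * x)) (hbase : ∀ x ∈ Icc t₀ (2 * t₀), m ≤ L x)
    (t : ℝ) (ht : t₀ ≤ t) : m * t₀ ≤ t * L t := by
  have hdyadic : ∀ n : ℕ, ∀ t, t₀ ≤ t → t ≤ 2 ^ n * (2 * t₀) → m * t₀ ≤ t * L t := by
    intro n
    induction n with
    | zero =>
      intro t ht htn
      have hLt : m ≤ L t := hbase t ⟨ht, by simpa using htn⟩
      nlinarith
    | succ n ih =>
      intro t ht htn
      by_cases hsmall : t ≤ 2 * t₀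
      · have hLt : m ≤ L t := hbase t ⟨ht, hsmall⟩
        nlinarith
      · have hhalf : t₀ ≤ t / 2 := by linarith
        have hih := ih (t / 2) hhalf (by rw [pow_succ] at htn; linarith)
        have hdbl := hdouble (t / 2) hhalf
        rw [mul_div_cancel₀ t two_ne_zero] at hdbl
        nlinarith
  obtain ⟨n, hn⟩ := pow_unbounded_of_one_lt (t / (2 * t₀)) one_lt_two
  exact hdyadic n t ht ((div_le_iff₀ (by positivity)).mp hn.le)

lemma exists_pos_le_mul_apply_of_tendsto_div_two {L : ℝ → ℝ} (hLpos : ∀ x, 0 < x → 0 < L x)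
    (hLcont : ContinuousOn L (Ioi 0))
    (h2 : Tendsto (fun x => L (2 * x) / L x) atTop (nhds 1)) :
    ∃ m, 0 < m ∧ ∀ᶠ t in atTop, m ≤ t * L t := by
  obtain ⟨x₀, hx₀⟩ := eventually_atTop.mp (h2.eventually (eventually_gt_nhds one_half_lt_one))
  set t₀ := max x₀ 1
  have ht₀ : 0 < t₀ := lt_max_of_lt_right one_pos
  have hdouble : ∀ x, t₀ ≤ x → L x ≤ 2 * L (2 * x) := fun x hx => by
    have h := hx₀ x (le_of_max_le_left hx)
    rw [lt_div_iff₀ (hLpos x (ht₀.trans_le hx))] at h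
    linarith
  have hIcc : Icc t₀ (2 * t₀) ⊆ Ioi 0 := fun x hx => ht₀.trans_le hx.1
  obtain ⟨z, hz, hzmin⟩ := isCompact_Icc.exists_isMinOn (nonempty_Icc.mpr (by linarith))
    (hLcont.mono hIcc)
  have hLz : 0 < L z := hLpos z (hIcc hz)
  exact ⟨L z * t₀, by positivity, eventually_atTop.mpr
    ⟨t₀, le_mul_apply_of_doubling ht₀ hLz.le hdouble fun x hx => hzmin hx⟩⟩

lemma rpow_neg_one_div_mul_le {m t u b : ℝ} (hm : 0 < m) (hb : 0 < b) (ht : 1 ≤ t)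
    (h : m ≤ t * u) : u ^ (-(1 / (b * t))) ≤ exp ((1 + |log m|) / b) := by
  have ht0 : 0 < t := one_pos.trans_le ht
  have hu : 0 < u := pos_of_mul_pos_right (hm.trans_le h) ht0.le
  have hlog : log m ≤ log t + log u := by
    rw [← log_mul ht0.ne' hu.ne']
    exact log_le_log hm h
  have hlogt : log t ≤ t := (log_le_sub_one_of_pos ht0).trans (by linarith)
  rw [rpow_def_of_pos hu, exp_le_exp, mul_neg, mul_one_div, neg_div',
    div_le_div_iff₀ (by positivity) hb]
  have hneg : -log u ≤ (1 + |log m|) * t := by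
    nlinarith [neg_abs_le (log m), abs_nonneg (log m)]
  nlinarith [mul_le_mul_of_nonneg_right hneg hb.le]

lemma meas_le_abs_le_of_eLpNorm_le {X : Type*} [MeasurableSpace X] {μ : Measure X} {f : X → ℝ}
    (hf : AEStronglyMeasurable f μ) {p y M : ℝ} (hp : 0 < p) (hy : 0 < y) (hM : 0 ≤ M)
    (hfM : eLpNorm f (ENNReal.ofReal p) μ ≤ ENNReal.ofReal M) :
    μ {x | y ≤ |f x|} ≤ ENNReal.ofReal ((M / y) ^ p) := by
  have hset : {x | y ≤ |f x|} = {x | ENNReal.ofReal y ≤ ‖f x‖ₑ} := by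
    ext x
    change y ≤ |f x| ↔ ENNReal.ofReal y ≤ ‖f x‖ₑ
    rw [← ofReal_norm, norm_eq_abs, ENNReal.ofReal_le_ofReal_iff (abs_nonneg _)]
  have hmarkov := meas_ge_le_mul_pow_eLpNorm_enorm μ (ENNReal.ofReal_pos.mpr hp).ne'
    ofReal_ne_top hf (ENNReal.ofReal_pos.mpr hy).ne' (fun h => absurd h ofReal_ne_top)
  rw [toReal_ofReal hp.le] at hmarkov
  calc μ {x | y ≤ |f x|}
      ≤ (ENNReal.ofReal y)⁻¹ ^ p * eLpNorm f (ENNReal.ofReal p) μ ^ p := hset ▸ hmarkov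
    _ ≤ (ENNReal.ofReal y)⁻¹ ^ p * ENNReal.ofReal M ^ p := by gcongr
    _ = ENNReal.ofReal ((M / y) ^ p) := by
      rw [← ofReal_inv_of_pos hy, ofReal_rpow_of_nonneg (by positivity) hp.le,
        ofReal_rpow_of_nonneg hM hp.le, ← ofReal_mul (by positivity),
        ← mul_rpow (by positivity) hM, inv_mul_eq_div]

lemma rpow_sub_one_div_le {b γ t u K : ℝ} (hb : 0 < b) (hγ : -1 < γ) (ht : 1 ≤ t) (hu : 0 < u)
    (hK : u ^ (-(1 / (b * t))) ≤ K) :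
    (t ^ ((γ + 1) / b) * u ^ (1 / b) / exp t) ^ (b - 1 / t) ≤
      exp 1 * K * (exp t ^ (-b) * t ^ (γ + 1) * u) := by
  have ht0 : 0 < t := one_pos.trans_le ht
  have hsplit : (t ^ ((γ + 1) / b) * u ^ (1 / b) / exp t) ^ (b - 1 / t) =
      exp 1 * u ^ (-(1 / (b * t))) * (exp t ^ (-b) * t ^ ((γ + 1) / b * (b - 1 / t)) * u) := by
    rw [div_rpow (by positivity) (exp_pos t).le, mul_rpow (by positivity) (by positivity),
      ← rpow_mul ht0.le, ← rpow_mul hu.le, ← exp_mul, ← exp_mul]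
    have hu_exp : 1 / b * (b - 1 / t) = 1 + -(1 / (b * t)) := by field_simp; ring
    have hexp : (exp (t * (b - 1 / t)))⁻¹ = exp 1 * exp (t * -b) := by
      rw [← exp_neg, ← exp_add]
      congr 1
      field_simp
      ring
    rw [hu_exp, rpow_add hu, Real.rpow_one, div_eq_mul_inv, hexp]
    ring
  have htpow : t ^ ((γ + 1) / b * (b - 1 / t)) ≤ t ^ (γ + 1) := by
    refine rpow_le_rpow_of_exponent_le ht ?_
    rw [div_mul_eq_mul_div, div_le_iff₀ hb]
    exact mul_le_mul_of_nonneg_left (sub_le_self b (by positivity)) (by linarith)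
  have hK0 : 0 ≤ K := (rpow_pos_of_pos hu _).le.trans hK
  rw [hsplit]
  gcongr

lemma exists_pos_forall_le_of_eventually_le {F : ℝ → ℝ≥0∞} {g : ℝ → ℝ} {a C₁ : ℝ}
    (hF : ∀ t, F t ≤ 1) (hg : ContinuousOn g (Ici a)) (hgpos : ∀ t, a ≤ t → 0 < g t)
    (hlarge : ∀ᶠ t in atTop, F t ≤ ENNReal.ofReal (C₁ * g t)) :
    ∃ C, 0 < C ∧ ∀ t, a ≤ t → F t ≤ ENNReal.ofReal (C * g t) := by
  obtain ⟨T, hT⟩ := eventually_atTop.mp hlarge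
  obtain ⟨z, hz, hzmin⟩ := isCompact_Icc.exists_isMinOn (nonempty_Icc.mpr (le_max_left a T))
    (hg.mono Icc_subset_Ici_self)
  have hgz : 0 < g z := hgpos z hz.1
  refine ⟨max C₁ (1 / g z), lt_max_of_lt_right (by positivity), fun t ht => ?_⟩
  rcases le_or_gt T t with hTt | htT
  · exact (hT t hTt).trans (ofReal_le_ofReal (mul_le_mul_of_nonneg_right (le_max_left _ _)
      (hgpos t ht).le))
  · have hmin : g z ≤ g t := hzmin ⟨ht, le_max_of_le_right htT.le⟩
    refine (hF t).trans (ENNReal.one_le_ofReal.mpr ?_)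
    calc 1 = 1 / g z * g z := (one_div_mul_cancel hgz.ne').symm
      _ ≤ max C₁ (1 / g z) * g t := mul_le_mul (le_max_right _ _) hmin hgz.le (by positivity)

lemma meas_exp_le_abs_le_of_moment_bound {X : Type*} [MeasurableSpace X] {μ : Measure X}
    {f : X → ℝ} (hf : AEStronglyMeasurable f μ) {b γ : ℝ} {L : ℝ → ℝ} (hb : 1 < b) (hγ : -1 < γ)
    (hmom : ∀ p : ℝ, 1 ≤ p → p < b →
      eLpNorm f (ENNReal.ofReal p) μ ≤
        ENNReal.ofReal ((b - p) ^ (-((γ + 1) / b)) * L (1 / (b - p)) ^ (1 / b)))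
    {m t : ℝ} (hm : 0 < m) (ht1 : 1 ≤ t) (htb : 1 / (b - 1) < t) (hmt : m ≤ t * L t) :
    μ {x | exp t ≤ |f x|} ≤
      ENNReal.ofReal (exp 1 * exp ((1 + |log m|) / b) * (exp t ^ (-b) * t ^ (γ + 1) * L t)) := by
  have hb0 : 0 < b := one_pos.trans hb
  have ht0 : 0 < t := one_pos.trans_le ht1
  have hLt : 0 < L t := pos_of_mul_pos_right (hm.trans_le hmt) ht0.le
  have hp1 : 1 ≤ b - 1 / t := by
    rw [div_lt_iff₀ (by linarith)] at htb
    rw [le_sub_comm, div_le_iff₀ ht0]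
    linarith
  have hmom_t := hmom (b - 1 / t) hp1 (sub_lt_self b (by positivity))
  have hbound_t : (b - (b - 1 / t)) ^ (-((γ + 1) / b)) * L (1 / (b - (b - 1 / t))) ^ (1 / b) =
      t ^ ((γ + 1) / b) * L t ^ (1 / b) := by
    rw [_root_.sub_sub_cancel, one_div_one_div, one_div t, inv_rpow ht0.le, ← rpow_neg ht0.le,
      neg_neg]
  rw [hbound_t] at hmom_t
  exact (meas_le_abs_le_of_eLpNorm_le hf (by linarith) (exp_pos t) (by positivity) hmom_t).trans
    (ofReal_le_ofReal (rpow_sub_one_div_le hb0 hγ ht1 hLt (rpow_neg_one_div_mul_le hm hb0 ht1 hmt)))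

/-- **Example 2.2, estimate (2.16).** If `|f|_p ≤ (b-p)^{-(γ+1)/b} L(1/(b-p))^{1/b}` for
all `p ∈ [1,b)`, with `L` slowly varying, then the tail of `f` satisfies
`T_f(y) ≤ C y^{-b} (ln y)^{γ+1} L(ln y)` for `y ≥ e` (logarithmic gap `γ → γ+1`). -/
theorem moment_to_tail_bounded_support {X : Type*} [MeasurableSpace X]
    (μ : Measure X) [IsProbabilityMeasure μ]
    (b γ : ℝ) (hb : 1 < b) (hγ : -1 < γ)
    (L : ℝ → ℝ) (hLpos : ∀ x : ℝ, 0 < x → 0 < L x)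
    (hLcont : ContinuousOn L (Set.Ioi 0))
    (hLslow : ∀ c : ℝ, 0 < c →
      Filter.Tendsto (fun x : ℝ => L (c * x) / L x) Filter.atTop (nhds 1))
    (f : X → ℝ) (hf : Measurable f)
    (hmom : ∀ p : ℝ, 1 ≤ p → p < b →
      eLpNorm f (ENNReal.ofReal p) μ ≤
        ENNReal.ofReal ((b - p) ^ (-((γ + 1) / b)) * L (1 / (b - p)) ^ (1 / b))) :
    ∃ C : ℝ, 0 < C ∧ ∀ y : ℝ, Real.exp 1 ≤ y →
      μ {x | y ≤ |f x|} ≤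
        ENNReal.ofReal (C * y ^ (-b) * Real.log y ^ (γ + 1) * L (Real.log y)) := by
  obtain ⟨m, hm, hlow⟩ :=
    exists_pos_le_mul_apply_of_tendsto_div_two hLpos hLcont (hLslow 2 two_pos)
  set g : ℝ → ℝ := fun t => exp t ^ (-b) * t ^ (γ + 1) * L t
  have hg : ContinuousOn g (Ici 1) := by
    refine ContinuousOn.mul (ContinuousOn.mul ?_ ?_)
      (hLcont.mono fun t ht => mem_Ioi.mpr (one_pos.trans_le ht))
    · exact (continuous_exp.rpow_const fun t => Or.inl (exp_pos t).ne').continuousOn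
    · exact continuousOn_id.rpow_const fun t _ => Or.inr (by linarith)
  have hgpos : ∀ t, 1 ≤ t → 0 < g t := fun t ht => by
    have := hLpos t (one_pos.trans_le ht)
    positivity
  have hlarge : ∀ᶠ t in atTop, μ {x | exp t ≤ |f x|} ≤
      ENNReal.ofReal (exp 1 * exp ((1 + |log m|) / b) * g t) := by
    filter_upwards [hlow, eventually_ge_atTop 1, eventually_gt_atTop (1 / (b - 1))]
      with t hmt ht1 htb
    exact meas_exp_le_abs_le_of_moment_bound hf.aestronglyMeasurable hb hγ hmom hm ht1 htb hmt
  obtain ⟨C, hC, hCg⟩ := exists_pos_forall_le_of_eventually_le (fun _ => prob_le_one) hg hgpos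
    hlarge
  refine ⟨C, hC, fun y hy => ?_⟩
  have hy0 : 0 < y := (exp_pos 1).trans_le hy
  have hbound := hCg (log y) ((le_log_iff_exp_le hy0).mpr hy)
  simpa only [g, exp_log hy0, mul_assoc] using hbound
end
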